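/- For a finite hidden Markov model, the backward sampling kernel is given by reweighting the filter distribution by the transition probability: for 1 ≤ t ≤ T−1, P(X_t = x | X_{t+1} = x*, Y_{1:t} = y_{1:t}) = w_t(x) · p(x* | x) / Σ_{x'∈S} w_t(x') · p(x* | x'), where w_t(x) := P(X_t = x | Y_{1:t} = y_{1:t}), provided the conditioning event {X_{t+1} = x*, Y_{1:t} = y_{1:t}} has positive probability. -/

import Mathlib

open Finset

namespace FiniteHMM

noncomputable section

/-- A trajectory of a hidden Markov model over `T` steps: hidden states at times
`0, 1, ..., T` and observations at times `1, ..., T` (observation at time `i+1` is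
component `i`). -/
abbrev Traj (S Y : Type) (T : ℕ) : Type := (Fin (T + 1) → S) × (Fin T → Y)

variable {S Y : Type} [Fintype S] [Fintype Y]

/-- Joint probability of a complete trajectory:
`ρ(x₀) ∏ₜ p(xₜ | xₜ₋₁) g(yₜ | xₜ)`, where `p x' x` is the probability of a transition
from `x'` to `x` and `g x y` is the probability of emitting `y` from state `x`. -/
def joint (T : ℕ) (rho : S → ℝ) (p : S → S → ℝ) (g : S → Y → ℝ)
    (ω : Traj S Y T) : ℝ :=
  rho (ω.1 0) *
    ∏ i : Fin T, p (ω.1 i.castSucc) (ω.1 i.succ) * g (ω.1 i.succ) (ω.2 i)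

open Classical in
/-- Probability of an event `A` of trajectories. -/
def Pr (T : ℕ) (rho : S → ℝ) (p : S → S → ℝ) (g : S → Y → ℝ)
    (A : Traj S Y T → Prop) : ℝ :=
  ∑ ω : Traj S Y T, if A ω then joint T rho p g ω else 0

/-- Conditional probability `P(A | B)`. -/
def cPr (T : ℕ) (rho : S → ℝ) (p : S → S → ℝ) (g : S → Y → ℝ)
    (A B : Traj S Y T → Prop) : ℝ :=
  Pr T rho p g (fun ω => A ω ∧ B ω) / Pr T rho p g B

/-!
Summing the joint density over the states after time `t + 1` and the observations from time
`t + 1` on leaves, since every row of `p` and of `g` sums to one, the Markov property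
`P(Xₜ = x, X_{t+1} = x*, Y_{1:t}) = P(Xₜ = x, Y_{1:t}) p(x, x*)`.
Summing it over `x` gives the denominator, and the normalisation `P(Y_{1:t})` of the filter
cancels between numerator and denominator.
-/

lemma _root_.Fin.forall_lt_imp_iff_forall_castLE {t T : ℕ} (h : t ≤ T) (P : Fin T → Prop) :
    (∀ i : Fin T, (i : ℕ) < t → P i) ↔ ∀ i : Fin t, P (Fin.castLE h i) :=
  ⟨fun H i => H _ i.2, fun H i hi => H ⟨i, hi⟩⟩

lemma _root_.div_mul_div_sum_div_mul {ι : Type*} [Fintype ι] (w q : ι → ℝ) {c : ℝ} (hc : c ≠ 0)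
    (i : ι) : w i / c * q i / ∑ j, w j / c * q j = w i * q i / ∑ j, w j * q j := by
  simp only [div_mul_eq_mul_div, ← Finset.sum_div]
  exact div_div_div_cancel_right₀ hc _ _

def Traj.snoc {T : ℕ} (ω : Traj S Y T) (s : S) (y : Y) : Traj S Y (T + 1) :=
  (Fin.snoc ω.1 s, Fin.snoc ω.2 y)

def Traj.restrict {M T : ℕ} (h : M ≤ T) (ω : Traj S Y T) : Traj S Y M :=
  (fun i => ω.1 (Fin.castLE (by omega) i), fun i => ω.2 (Fin.castLE h i))

section Snoc

omit [Fintype S] [Fintype Y]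

variable {T : ℕ} (ω : Traj S Y T) (s : S) (y : Y)

@[simp]
lemma Traj.snoc_fst_castSucc (i : Fin (T + 1)) : (ω.snoc s y).1 i.castSucc = ω.1 i :=
  Fin.snoc_castSucc (α := fun _ => S) ..

@[simp]
lemma Traj.snoc_fst_last : (ω.snoc s y).1 (Fin.last (T + 1)) = s :=
  Fin.snoc_last (α := fun _ => S) ..

@[simp]
lemma Traj.restrict_snoc : Traj.restrict (Nat.le_succ T) (ω.snoc s y) = ω :=
  Prod.ext (funext fun _ => Fin.snoc_castSucc (α := fun _ => S) ..)
    (funext fun _ => Fin.snoc_castSucc (α := fun _ => Y) ..)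

end Snoc

lemma sum_traj_succ {M : Type*} [AddCommMonoid M] {T : ℕ} (F : Traj S Y (T + 1) → M) :
    ∑ ω, F ω = ∑ ω : Traj S Y T, ∑ s, ∑ y, F (ω.snoc s y) := by
  let e : Traj S Y T × S × Y ≃ Traj S Y (T + 1) :=
    { toFun := fun q => q.1.snoc q.2.1 q.2.2
      invFun := fun ω => ((Fin.init ω.1, Fin.init ω.2), ω.1 (Fin.last _), ω.2 (Fin.last _))
      left_inv := fun q => by simp [Traj.snoc]
      right_inv := fun ω => by simp [Traj.snoc] }
  rw [← e.sum_comp]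
  simp only [Fintype.sum_prod_type]
  rfl

section Probability

variable {T : ℕ} {rho : S → ℝ} {p : S → S → ℝ} {g : S → Y → ℝ}

omit [Fintype S] [Fintype Y] in
lemma joint_snoc (ω : Traj S Y T) (s : S) (y : Y) :
    joint (T + 1) rho p g (ω.snoc s y) =
      joint T rho p g ω * (p (ω.1 (Fin.last T)) s * g s y) := by
  simp only [joint, Traj.snoc, Fin.prod_univ_castSucc, Fin.succ_castSucc, Fin.snoc_castSucc,
    Fin.snoc_last, Fin.succ_last]
  rw [← Fin.castSucc_zero, Fin.snoc_castSucc]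
  ring

lemma Pr_nonneg (hrho0 : ∀ x, 0 ≤ rho x) (hp0 : ∀ x' x, 0 ≤ p x' x) (hg0 : ∀ x y, 0 ≤ g x y)
    (A : Traj S Y T → Prop) : 0 ≤ Pr T rho p g A :=
  sum_nonneg fun _ _ => by
    split_ifs
    · exact mul_nonneg (hrho0 _) (prod_nonneg fun _ _ => mul_nonneg (hp0 _ _) (hg0 _ _))
    · exact le_rfl

lemma Pr_eq_sum_fiber {α : Type*} [Fintype α] (f : Traj S Y T → α) (A : Traj S Y T → Prop) :
    Pr T rho p g A = ∑ a, Pr T rho p g (fun ω => f ω = a ∧ A ω) := by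
  classical
  unfold Pr
  rw [sum_comm]
  refine sum_congr rfl fun ω _ => ?_
  by_cases hA : A ω <;> simp [hA]

lemma Pr_comp_restrict_succ (hp1 : ∀ x' : S, ∑ x : S, p x' x = 1)
    (hg1 : ∀ x : S, ∑ y : Y, g x y = 1) (A : Traj S Y T → Prop) :
    Pr (T + 1) rho p g (fun ω => A (Traj.restrict (Nat.le_succ T) ω)) = Pr T rho p g A := by
  unfold Pr
  rw [sum_traj_succ]
  refine sum_congr rfl fun ω _ => ?_
  split_ifs <;> simp [*, joint_snoc, ← mul_sum]

lemma Pr_comp_restrict (hp1 : ∀ x' : S, ∑ x : S, p x' x = 1)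
    (hg1 : ∀ x : S, ∑ y : Y, g x y = 1) {M : ℕ} (h : M ≤ T) (A : Traj S Y M → Prop) :
    Pr T rho p g (fun ω => A (Traj.restrict h ω)) = Pr M rho p g A := by
  induction T, h using Nat.le_induction with
  | base => rfl
  | succ T hMT ih =>
    exact (Pr_comp_restrict_succ hp1 hg1 (fun ω => A (Traj.restrict hMT ω))).trans ih

lemma Pr_last_and_comp_restrict_succ (hg1 : ∀ x : S, ∑ y : Y, g x y = 1)
    (A : Traj S Y T → Prop) (x s : S) :
    Pr (T + 1) rho p g (fun ω => ω.1 (Fin.last T).castSucc = x ∧ ω.1 (Fin.last (T + 1)) = s ∧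
        A (Traj.restrict (Nat.le_succ T) ω)) =
      Pr T rho p g (fun ω => ω.1 (Fin.last T) = x ∧ A ω) * p x s := by
  classical
  unfold Pr
  rw [sum_traj_succ, sum_mul]
  refine sum_congr rfl fun ω _ => ?_
  simp only [Traj.restrict_snoc, joint_snoc, Traj.snoc_fst_castSucc, Traj.snoc_fst_last]
  by_cases hA : ω.1 (Fin.last T) = x ∧ A ω
  · obtain ⟨rfl, hA⟩ := hA
    simp [hA, ← mul_sum, hg1]
  · simp only [if_neg hA, zero_mul]
    exact sum_eq_zero fun _ _ => sum_eq_zero fun _ _ => if_neg fun h => hA ⟨h.1, h.2.2⟩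

lemma Pr_state_and_succ_state (hp1 : ∀ x' : S, ∑ x : S, p x' x = 1)
    (hg1 : ∀ x : S, ∑ y : Y, g x y = 1) {t : ℕ} (h : t + 1 ≤ T) (A : Traj S Y t → Prop)
    (x s : S) :
    Pr T rho p g (fun ω => ω.1 ⟨t, by omega⟩ = x ∧ ω.1 ⟨t + 1, by omega⟩ = s ∧
        A (Traj.restrict (by omega) ω)) =
      Pr T rho p g (fun ω => ω.1 ⟨t, by omega⟩ = x ∧ A (Traj.restrict (by omega) ω)) *
        p x s :=
  calc _ = Pr (t + 1) rho p g (fun ω => ω.1 (Fin.last t).castSucc = x ∧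
        ω.1 (Fin.last (t + 1)) = s ∧ A (Traj.restrict (Nat.le_succ t) ω)) :=
        Pr_comp_restrict hp1 hg1 h _
    _ = Pr t rho p g (fun ω => ω.1 (Fin.last t) = x ∧ A ω) * p x s :=
        Pr_last_and_comp_restrict_succ hg1 A x s
    _ = _ := by rw [← Pr_comp_restrict hp1 hg1 (by omega : t ≤ T)]; rfl

end Probability

/-- The HMM backward sampling kernel reweights the filter distribution by the transition
probability:
`P(Xₜ = x | X_{t+1} = x*, Y_{1:t} = y_{1:t})
  = wₜ(x) p(x* | x) / ∑_{x'} wₜ(x') p(x* | x')`,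
where `wₜ(x) = P(Xₜ = x | Y_{1:t} = y_{1:t})`.  Here `p x x*` is the probability of a
transition from `x` to `x*`, and `yobs i` denotes `y_{i+1}`. -/
theorem backward_sampling_kernel
    (T : ℕ) (rho : S → ℝ) (p : S → S → ℝ) (g : S → Y → ℝ)
    (hrho0 : ∀ x, 0 ≤ rho x)
    (hp0 : ∀ x' x, 0 ≤ p x' x) (hp1 : ∀ x' : S, (∑ x : S, p x' x) = 1)
    (hg0 : ∀ x y, 0 ≤ g x y) (hg1 : ∀ x : S, (∑ y : Y, g x y) = 1)
    (yobs : Fin T → Y) (t : ℕ) (ht1 : 1 ≤ t) (ht2 : t ≤ T - 1)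
    (x : S) (xstar : S)
    (hpos : 0 < Pr T rho p g (fun ω =>
      ω.1 ⟨t + 1, by omega⟩ = xstar ∧
        ∀ i : Fin T, (i : ℕ) < t → ω.2 i = yobs i)) :
    cPr T rho p g (fun ω => ω.1 ⟨t, by omega⟩ = x)
        (fun ω => ω.1 ⟨t + 1, by omega⟩ = xstar ∧
          ∀ i : Fin T, (i : ℕ) < t → ω.2 i = yobs i) =
      cPr T rho p g (fun ω => ω.1 ⟨t, by omega⟩ = x)
          (fun ω => ∀ i : Fin T, (i : ℕ) < t → ω.2 i = yobs i) * p x xstar /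
        ∑ x' : S,
          cPr T rho p g (fun ω => ω.1 ⟨t, by omega⟩ = x')
            (fun ω => ∀ i : Fin T, (i : ℕ) < t → ω.2 i = yobs i) * p x' xstar := by
  have hT : t + 1 ≤ T := by omega
  set obs : Traj S Y t → Prop := fun ω => ∀ i, ω.2 i = yobs (Fin.castLE (by omega) i)
  have hobs (ω : Traj S Y T) : (∀ i : Fin T, (i : ℕ) < t → ω.2 i = yobs i) ↔
      obs (Traj.restrict (by omega) ω) :=
    Fin.forall_lt_imp_iff_forall_castLE _ _
  simp only [cPr, hobs] at hpos ⊢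
  set w : S → ℝ := fun x' =>
    Pr T rho p g (fun ω => ω.1 ⟨t, by omega⟩ = x' ∧ obs (Traj.restrict (by omega) ω))
  have hjoint (x' s : S) : Pr T rho p g (fun ω => ω.1 ⟨t, by omega⟩ = x' ∧
      ω.1 ⟨t + 1, by omega⟩ = s ∧ obs (Traj.restrict (by omega) ω)) = w x' * p x' s :=
    Pr_state_and_succ_state hp1 hg1 hT obs x' s
  have hpred : Pr T rho p g (fun ω => ω.1 ⟨t + 1, by omega⟩ = xstar ∧
      obs (Traj.restrict (by omega) ω)) = ∑ x', w x' * p x' xstar := by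
    rw [Pr_eq_sum_fiber fun ω => ω.1 ⟨t, by omega⟩]
    exact sum_congr rfl fun x' _ => hjoint x' xstar
  have hnorm : Pr T rho p g (fun ω => obs (Traj.restrict (by omega) ω)) = ∑ x', w x' :=
    Pr_eq_sum_fiber (fun ω => ω.1 ⟨t, by omega⟩) _
  rw [hpred] at hpos
  have hw_nonneg (x' : S) : 0 ≤ w x' := Pr_nonneg hrho0 hp0 hg0 _
  have hw0 : ∑ x', w x' ≠ 0 := fun h0 => by
    have hw := (sum_eq_zero_iff_of_nonneg fun x' _ => hw_nonneg x').1 h0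
    rw [sum_eq_zero fun x' hx' => by rw [hw x' hx', zero_mul]] at hpos
    exact hpos.false
  rw [hjoint, hpred, hnorm, div_mul_div_sum_div_mul w (p · xstar) hw0]

end
end FiniteHMM
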